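/- Let 1 ≤ i ≤ n−1, let a ≥ 1 with i − a ≥ 1, let b ≥ 1 with i + b + 1 ≤ n, and let g ∈ ℚ(v)[x_1,…,x_n] be a polynomial not involving the variables x_i and x_{i+1}. Then: (1) ∇_i((x_{i−a} − v^{a+1} x_i)(x_{i+1} − v^{b+1} x_{i+b+1})·g) = (x_{i−a} − v^{a+b+2} x_{i+b+1})(v^{−1} x_i − v x_{i+1})·g, and (2) ∇_i((x_{i+1} − v^{b+1} x_{i+b+1})·g) = (v^{−1} x_i − v x_{i+1})·g. -/
import Mathlib


open scoped Classical

set_option maxHeartbeats 1000000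
set_option synthInstance.maxHeartbeats 1000000

noncomputable section

/-- The field ℚ(v) of rational functions. -/
abbrev F : Type := RatFunc ℚ

/-- The variable v. -/
def v : F := RatFunc.X

/-- The quantum integer [r] = (v^r - v^{-r})/(v - v^{-1}). -/
def qint (r : ℕ) : F := (v ^ r - v⁻¹ ^ r) / (v - v⁻¹)


/-- The variable x_p (1-based position p) in ℚ(v)[x_1,…,x_n]. -/
def xv (n p : ℕ) : MvPolynomial (Fin n) F :=
  if h : 1 ≤ p ∧ p ≤ n then MvPolynomial.X ⟨p - 1, by omega⟩ else 0

/-- Exchange of the variables x_i and x_{i+1} (1-based, 1 ≤ i ≤ n−1). -/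
def swapf (n i : ℕ) (f : MvPolynomial (Fin n) F) : MvPolynomial (Fin n) F :=
  if h : 1 ≤ i ∧ i < n then
    MvPolynomial.rename (Equiv.swap ⟨i - 1, by omega⟩ ⟨i, h.2⟩) f
  else f

/-- The divided difference ∂_i f = (f − s_i f)/(x_i − x_{i+1}). -/
def ddiff (n i : ℕ) (f : MvPolynomial (Fin n) F) : MvPolynomial (Fin n) F :=
  if h : ∃ g, f - swapf n i f = (xv n i - xv n (i + 1)) * g then h.choose else 0

/-- The operator ∇_i f = (v x_{i+1} − v⁻¹ x_i)·∂_i f. -/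
def nabla (n i : ℕ) (f : MvPolynomial (Fin n) F) : MvPolynomial (Fin n) F :=
  (MvPolynomial.C v * xv n (i + 1) - MvPolynomial.C v⁻¹ * xv n i) * ddiff n i f




open MvPolynomial in
lemma xv_eq' (n p : ℕ) (h1 : 1 ≤ p) (h2 : p ≤ n) (j : Fin n) (hj : (j : ℕ) = p - 1) :
    xv n p = X j := by
  rw [xv, dif_pos ⟨h1, h2⟩]
  exact congrArg X (Fin.ext hj.symm)

open MvPolynomial in
lemma rename_swap_fix {n : ℕ} (u w : Fin n) (g : MvPolynomial (Fin n) F)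
    (hu : g.degreeOf u = 0) (hw : g.degreeOf w = 0) :
    rename (Equiv.swap u w) g = g := by
  have hu' : ∀ m ∈ g.support, m u = 0 := by
    have := (degreeOf_lt_iff (f := g) (n := u) (d := 1) one_pos).mp (by omega)
    intro m hm; have := this m hm; omega
  have hw' : ∀ m ∈ g.support, m w = 0 := by
    have := (degreeOf_lt_iff (f := g) (n := w) (d := 1) one_pos).mp (by omega)
    intro m hm; have := this m hm; omega
  ext d
  by_cases hd : d u = 0 ∧ d w = 0
  · have hmap : Finsupp.mapDomain (⇑(Equiv.swap u w)) d = d := by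
      rw [← Finsupp.equivMapDomain_eq_mapDomain]
      ext a
      simp only [Finsupp.equivMapDomain_apply, Equiv.symm_swap]
      rcases eq_or_ne a u with rfl | hau
      · rw [Equiv.swap_apply_left]; omega
      rcases eq_or_ne a w with rfl | haw
      · rw [Equiv.swap_apply_right]; omega
      · rw [Equiv.swap_apply_of_ne_of_ne hau haw]
    conv_lhs => rw [← hmap]
    rw [coeff_rename_mapDomain _ (Equiv.swap u w).injective]
  · have h1 : coeff d g = 0 := by
      rw [← notMem_support_iff]
      intro hm
      exact hd ⟨hu' d hm, hw' d hm⟩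
    rw [h1, ← notMem_support_iff]
    intro hm
    rw [support_rename_of_injective (Equiv.swap u w).injective] at hm
    simp only [Finset.mem_image] at hm
    obtain ⟨m, hm', rfl⟩ := hm
    rw [← Finsupp.equivMapDomain_eq_mapDomain] at hd
    simp only [Finsupp.equivMapDomain_apply, Equiv.symm_swap,
      Equiv.swap_apply_left, Equiv.swap_apply_right] at hd
    exact hd ⟨hw' m hm', hu' m hm'⟩

open MvPolynomial in
lemma ddiff_eq (n i : ℕ) (hi : 1 ≤ i) (hin : i < n)
    (f q : MvPolynomial (Fin n) F)
    (hq : f - swapf n i f = (xv n i - xv n (i + 1)) * q) : ddiff n i f = q := by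
  have hne : (xv n i - xv n (i + 1) : MvPolynomial (Fin n) F) ≠ 0 := by
    rw [xv_eq' n i hi (by omega) ⟨i - 1, by omega⟩ rfl,
      xv_eq' n (i + 1) (by omega) (by omega) ⟨i, hin⟩ (by simp)]
    rw [sub_ne_zero]
    intro h
    have := X_injective h
    simp only [Fin.mk.injEq] at this
    omega
  have h : ∃ g, f - swapf n i f = (xv n i - xv n (i + 1)) * g := ⟨q, hq⟩
  rw [ddiff, dif_pos h]
  exact mul_left_cancel₀ hne (h.choose_spec.symm.trans hq)


/-- The two local rules for ∇_i on products of paired factors. -/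
theorem nabla_local_rules (n i a b : ℕ) (hi : 1 ≤ i) (hin : i < n)
    (ha : 1 ≤ a) (hai : a < i) (hb : 1 ≤ b) (hibn : i + b + 1 ≤ n)
    (g : MvPolynomial (Fin n) F)
    (hgi : g.degreeOf ⟨i - 1, by omega⟩ = 0) (hgi1 : g.degreeOf ⟨i, hin⟩ = 0) :
    nabla n i ((xv n (i - a) - MvPolynomial.C (v ^ (a + 1)) * xv n i) *
        (xv n (i + 1) - MvPolynomial.C (v ^ (b + 1)) * xv n (i + b + 1)) * g) =
      (xv n (i - a) - MvPolynomial.C (v ^ (a + b + 2)) * xv n (i + b + 1)) *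
        (MvPolynomial.C v⁻¹ * xv n i - MvPolynomial.C v * xv n (i + 1)) * g ∧
    nabla n i ((xv n (i + 1) - MvPolynomial.C (v ^ (b + 1)) * xv n (i + b + 1)) * g) =
      (MvPolynomial.C v⁻¹ * xv n i - MvPolynomial.C v * xv n (i + 1)) * g := by
  have h1 : 1 ≤ i - a := by omega
  have hun : i - 1 < n := by omega
  have htn : i + b < n := by omega
  have hsn : i - a - 1 < n := by omega
  have hxi : xv n i = MvPolynomial.X ⟨i - 1, hun⟩ := xv_eq' n i hi (by omega) _ rfl
  have hxi1 : xv n (i + 1) = MvPolynomial.X ⟨i, hin⟩ :=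
    xv_eq' n (i + 1) (by omega) (by omega) ⟨i, hin⟩ (by simp)
  have hxt : xv n (i + b + 1) = MvPolynomial.X ⟨i + b, htn⟩ :=
    xv_eq' n (i + b + 1) (by omega) (by omega) ⟨i + b, htn⟩ (by simp)
  have hxs : xv n (i - a) = MvPolynomial.X ⟨i - a - 1, hsn⟩ :=
    xv_eq' n (i - a) (by omega) (by omega) ⟨i - a - 1, hsn⟩ rfl
  have hsw : ∀ f, swapf n i f =
      MvPolynomial.rename (Equiv.swap ⟨i - 1, hun⟩ ⟨i, hin⟩) f := fun f => dif_pos ⟨hi, hin⟩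
  have hg : MvPolynomial.rename (Equiv.swap (⟨i - 1, hun⟩ : Fin n) ⟨i, hin⟩) g = g :=
    rename_swap_fix _ _ g hgi hgi1
  have htu : (⟨i + b, htn⟩ : Fin n) ≠ ⟨i - 1, hun⟩ := by
    simp only [ne_eq, Fin.mk.injEq]; omega
  have htw : (⟨i + b, htn⟩ : Fin n) ≠ ⟨i, hin⟩ := by
    simp only [ne_eq, Fin.mk.injEq]; omega
  have hsu : (⟨i - a - 1, hsn⟩ : Fin n) ≠ ⟨i - 1, hun⟩ := by
    simp only [ne_eq, Fin.mk.injEq]; omega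
  have hsw2 : (⟨i - a - 1, hsn⟩ : Fin n) ≠ ⟨i, hin⟩ := by
    simp only [ne_eq, Fin.mk.injEq]; omega
  have hC : (MvPolynomial.C (v ^ (a + 1)) : MvPolynomial (Fin n) F) * MvPolynomial.C (v ^ (b + 1))
      = MvPolynomial.C (v ^ (a + b + 2)) := by
    have h2 : a + 1 + (b + 1) = a + b + 2 := by omega
    rw [← map_mul, ← pow_add, h2]
  rw [hxi, hxi1, hxt, hxs]
  have hd1 : ddiff n i ((MvPolynomial.X ⟨i - a - 1, hsn⟩ -
      MvPolynomial.C (v ^ (a + 1)) * MvPolynomial.X ⟨i - 1, hun⟩) *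
      (MvPolynomial.X ⟨i, hin⟩ - MvPolynomial.C (v ^ (b + 1)) * MvPolynomial.X ⟨i + b, htn⟩) * g) =
      (MvPolynomial.C (v ^ (a + b + 2)) * MvPolynomial.X ⟨i + b, htn⟩ -
        MvPolynomial.X ⟨i - a - 1, hsn⟩) * g := by
    apply ddiff_eq n i hi hin
    rw [hsw, map_mul, map_mul, map_sub, map_sub, map_mul, map_mul,
      MvPolynomial.rename_C, MvPolynomial.rename_C, MvPolynomial.rename_X,
      MvPolynomial.rename_X, MvPolynomial.rename_X, MvPolynomial.rename_X, hg,
      Equiv.swap_apply_left, Equiv.swap_apply_right,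
      Equiv.swap_apply_of_ne_of_ne htu htw,
      Equiv.swap_apply_of_ne_of_ne hsu hsw2, hxi, hxi1, ← hC]
    ring
  have hd2 : ddiff n i ((MvPolynomial.X ⟨i, hin⟩ -
      MvPolynomial.C (v ^ (b + 1)) * MvPolynomial.X ⟨i + b, htn⟩) * g) = -g := by
    apply ddiff_eq n i hi hin
    rw [hsw, map_mul, map_sub, map_mul, MvPolynomial.rename_C, MvPolynomial.rename_X,
      MvPolynomial.rename_X, hg, Equiv.swap_apply_right,
      Equiv.swap_apply_of_ne_of_ne htu htw, hxi, hxi1]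
    ring
  constructor
  · rw [nabla, hd1, hxi, hxi1]
    ring
  · rw [nabla, hd2, hxi, hxi1]
    ring

end
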